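/- Let N be a natural number, m ∈ ℝᴺ, K a symmetric N×N real matrix, α, β real numbers, and τ > 0. Let ψⁿ, ψⁿ⁺¹, pⁿ, pⁿ⁺¹ ∈ ℝᴺ and write ψ̄ = (ψⁿ + ψⁿ⁺¹)/2, p̄ = (pⁿ + pⁿ⁺¹)/2. Assume that for every index i: (i) mᵢ (1 − 2β p̄ᵢ)(pᵢⁿ⁺¹ − pᵢⁿ)/τ + α (K(ψⁿ⁺¹ − ψⁿ))ᵢ/τ + (Kψ̄)ᵢ = 0, and (ii) (1 − 2β p̄ᵢ)(ψᵢⁿ⁺¹ − ψᵢⁿ)/τ = (1 − 2β p̄ᵢ) p̄ᵢ − (β/6)(pᵢⁿ⁺¹ − pᵢⁿ)². Then, with E_h(ψ,p) = ½ ψᵀKψ + Σᵢ mᵢ (½ − (2β/3) pᵢ) pᵢ², one has E_h(ψⁿ⁺¹, pⁿ⁺¹) − E_h(ψⁿ, pⁿ) = −(α/τ) (ψⁿ⁺¹ − ψⁿ)ᵀ K (ψⁿ⁺¹ − ψⁿ). -/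

import Mathlib

/-!
The scheme is built on discrete gradients. For symmetric `K`, the quadratic part of the energy
satisfies `½ vᵀKv − ½ uᵀKu = (v − u)ᵀ K (u + v)/2` exactly; for the cubic potential
`F(x) = (½ − (2β/3)x)x²`, the difference `F(q) − F(p)` is `q − p` times the right-hand side of
the second equation of the scheme. Testing the first equation with `ψⁿ⁺¹ − ψⁿ` and the second
with `mᵢ(pⁿ⁺¹ − pⁿ)` and summing over `i`, the time-derivative terms cancel and only the viscous
term survives.
-/

open Matrix

/-- The discrete (mass-lumped) energy `E_h(ψ,p) = ½ψᵀKψ + Σᵢ mᵢ(½ − (2β/3)pᵢ)pᵢ²`. -/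
noncomputable def Eh {N : ℕ} (m : Fin N → ℝ) (K : Matrix (Fin N) (Fin N) ℝ) (β : ℝ)
    (ψ p : Fin N → ℝ) : ℝ :=
  (1 / 2) * (ψ ⬝ᵥ K.mulVec ψ) + ∑ i, m i * ((1 / 2 - (2 * β / 3) * p i) * (p i) ^ 2)

theorem Matrix.IsSymm.dotProduct_mulVec_comm {n R : Type*} [Fintype n] [CommSemiring R]
    {K : Matrix n n R} (hK : K.IsSymm) (u v : n → R) : u ⬝ᵥ K *ᵥ v = v ⬝ᵥ K *ᵥ u := by
  rw [dotProduct_mulVec, ← mulVec_transpose, hK.eq, dotProduct_comm]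

theorem Matrix.IsSymm.dotProduct_mulVec_self_sub {n R : Type*} [Fintype n] [CommRing R]
    {K : Matrix n n R} (hK : K.IsSymm) (u v : n → R) :
    v ⬝ᵥ K *ᵥ v - u ⬝ᵥ K *ᵥ u = (v - u) ⬝ᵥ K *ᵥ (u + v) := by
  rw [mulVec_add, dotProduct_add, sub_dotProduct, sub_dotProduct, hK.dotProduct_mulVec_comm v u]
  ring

noncomputable def cubicPotential (β x : ℝ) : ℝ := (1 / 2 - (2 * β / 3) * x) * x ^ 2

theorem cubicPotential_sub (β p q : ℝ) :
    cubicPotential β q - cubicPotential β p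
      = (q - p) * ((1 - 2 * β * ((p + q) / 2)) * ((p + q) / 2) - (β / 6) * (q - p) ^ 2) := by
  unfold cubicPotential
  ring

theorem Eh_sub_eq_of_discreteGradient {N : ℕ} (m : Fin N → ℝ) {K : Matrix (Fin N) (Fin N) ℝ}
    (hK : K.IsSymm) (β : ℝ) (ψ ψ' p p' r : Fin N → ℝ)
    (h : ∀ i, m i * (cubicPotential β (p' i) - cubicPotential β (p i))
      = -((ψ' - ψ) i * (r i + (K *ᵥ (ψ + ψ')) i / 2))) :
    Eh m K β ψ' p' - Eh m K β ψ p = -((ψ' - ψ) ⬝ᵥ r) := by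
  have hquad := hK.dotProduct_mulVec_self_sub ψ ψ'
  have hpot : ∑ i, m i * (cubicPotential β (p' i) - cubicPotential β (p i))
      = -((ψ' - ψ) ⬝ᵥ r) - (ψ' - ψ) ⬝ᵥ K *ᵥ (ψ + ψ') / 2 := by
    simp only [h, dotProduct, Finset.sum_div, ← Finset.sum_neg_distrib, ← Finset.sum_sub_distrib]
    exact Finset.sum_congr rfl fun i _ => by ring
  simp only [mul_sub, Finset.sum_sub_distrib] at hpot
  unfold Eh cubicPotential at *
  linear_combination hpot + hquad / 2

theorem one_step_discrete_energy_identity_general (N : ℕ) (m : Fin N → ℝ)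
    (K : Matrix (Fin N) (Fin N) ℝ) (hK : K.IsSymm) (α β τ : ℝ)
    (ψn ψn1 pn pn1 : Fin N → ℝ)
    (h1 : ∀ i, m i * (1 - 2 * β * ((pn i + pn1 i) / 2)) * (pn1 i - pn i) / τ
        + α * (K.mulVec (ψn1 - ψn)) i / τ
        + (K.mulVec (fun j => (ψn j + ψn1 j) / 2)) i = 0)
    (h2 : ∀ i, (1 - 2 * β * ((pn i + pn1 i) / 2)) * (ψn1 i - ψn i) / τ
        = (1 - 2 * β * ((pn i + pn1 i) / 2)) * ((pn i + pn1 i) / 2)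
          - (β / 6) * (pn1 i - pn i) ^ 2) :
    Eh m K β ψn1 pn1 - Eh m K β ψn pn
      = -(α / τ) * ((ψn1 - ψn) ⬝ᵥ K.mulVec (ψn1 - ψn)) := by
  have hmid : (fun j => (ψn j + ψn1 j) / 2) = (2 : ℝ)⁻¹ • (ψn + ψn1) := by
    funext j
    simp only [Pi.smul_apply, Pi.add_apply, smul_eq_mul]
    ring
  have hpot : ∀ i, m i * (cubicPotential β (pn1 i) - cubicPotential β (pn i))
      = -((ψn1 - ψn) i * (((α / τ) • K *ᵥ (ψn1 - ψn)) i + (K *ᵥ (ψn + ψn1)) i / 2)) := by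
    intro i
    have h1i := h1 i
    rw [hmid, mulVec_smul] at h1i
    simp only [cubicPotential_sub, Pi.sub_apply, Pi.smul_apply, smul_eq_mul] at h1i ⊢
    linear_combination (-(m i) * (pn1 i - pn i)) * h2 i + (ψn1 i - ψn i) * h1i
  rw [Eh_sub_eq_of_discreteGradient m hK β ψn ψn1 pn pn1 _ hpot, dotProduct_smul, smul_eq_mul,
    neg_mul]

/-- One-step (`k = q = 1`) instance of Lemma 4 of the paper: along the mass-lumped
structure-preserving scheme, the discrete energy changes exactly by the numerical
viscous dissipation `−(α/τ)(ψⁿ⁺¹−ψⁿ)ᵀK(ψⁿ⁺¹−ψⁿ)`. -/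
theorem one_step_discrete_energy_identity (N : ℕ) (m : Fin N → ℝ)
    (K : Matrix (Fin N) (Fin N) ℝ) (hK : K.IsSymm) (α β τ : ℝ) (hτ : 0 < τ)
    (ψn ψn1 pn pn1 : Fin N → ℝ)
    (h1 : ∀ i, m i * (1 - 2 * β * ((pn i + pn1 i) / 2)) * (pn1 i - pn i) / τ
        + α * (K.mulVec (ψn1 - ψn)) i / τ
        + (K.mulVec (fun j => (ψn j + ψn1 j) / 2)) i = 0)
    (h2 : ∀ i, (1 - 2 * β * ((pn i + pn1 i) / 2)) * (ψn1 i - ψn i) / τ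
        = (1 - 2 * β * ((pn i + pn1 i) / 2)) * ((pn i + pn1 i) / 2)
          - (β / 6) * (pn1 i - pn i) ^ 2) :
    Eh m K β ψn1 pn1 - Eh m K β ψn pn
      = -(α / τ) * ((ψn1 - ψn) ⬝ᵥ K.mulVec (ψn1 - ψn)) :=
  one_step_discrete_energy_identity_general N m K hK α β τ ψn ψn1 pn pn1 h1 h2
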